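/- Let θ* be any maximizer of the likelihood objective L and θ̂ be any maximizer of the surrogate objective L̂. Assuming |r(s,a;θ)| ≤ C_r and |U(s,a)| ≤ C_u for all s, a, θ, the suboptimality of θ̂ is bounded by twice the dynamics-mismatch term: L(θ*) − L(θ̂) ≤ (2γ C_v/(1−γ)) · E_{(s,a)∼d^E}[ ||P̂(·|s,a) − P(·|s,a)||₁ ], where C_v = (C_r + C_u + log|A|)/(1−γ). -/

import Mathlib

open Real BigOperators Finset

noncomputable section

/-- `P` is a transition kernel: each row `P s a ·` is a probability distribution. -/
def IsKernel {S A : Type} [Fintype S] (P : S → A → S → ℝ) : Prop :=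
  (∀ s a s', 0 ≤ P s a s') ∧ ∀ s a, ∑ s', P s a s' = 1

/-- `p` is a policy: each `p s ·` is a probability distribution over actions. -/
def IsPolicy {S A : Type} [Fintype A] (p : S → A → ℝ) : Prop :=
  (∀ s a, 0 ≤ p s a) ∧ ∀ s, ∑ a, p s a = 1

/-- `η` is a probability distribution over states. -/
def IsDist {S : Type} [Fintype S] (η : S → ℝ) : Prop :=
  (∀ s, 0 ≤ η s) ∧ ∑ s, η s = 1

/-- Distribution of the state at time `t` under initial distribution `η`,
policy `pol` and transition kernel `P`. -/
def stateDist {S A : Type} [Fintype S] [Fintype A]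
    (P : S → A → S → ℝ) (pol : S → A → ℝ) (η : S → ℝ) : ℕ → S → ℝ
  | 0 => η
  | (t + 1) => fun s' => ∑ s, ∑ a, stateDist P pol η t s * pol s a * P s a s'

/-- `E_{τ ∼ (η, pol, P)} [ ∑_t γ^t f(s_t, a_t) ]`. -/
def discSum {S A : Type} [Fintype S] [Fintype A]
    (γ : ℝ) (P : S → A → S → ℝ) (pol : S → A → ℝ) (η : S → ℝ) (f : S → A → ℝ) : ℝ :=
  ∑' t : ℕ, γ ^ t * ∑ s, ∑ a, stateDist P pol η t s * pol s a * f s a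

/-- Discounted state-action visitation measure
`d(s,a) = (1-γ) pol(a|s) ∑_t γ^t Pr(s_t = s)`. -/
def visit {S A : Type} [Fintype S] [Fintype A]
    (γ : ℝ) (P : S → A → S → ℝ) (pol : S → A → ℝ) (η : S → ℝ) (s : S) (a : A) : ℝ :=
  (1 - γ) * pol s a * ∑' t : ℕ, γ ^ t * stateDist P pol η t s

/-- Log-sum-exp soft value function `V(s) = log ∑_a exp Q(s,a)`. -/
def lse {S A : Type} [Fintype A] (Q : S → A → ℝ) (s : S) : ℝ :=
  Real.log (∑ a, Real.exp (Q s a))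

/-- Softmax policy `π(a|s) = exp Q(s,a) / ∑_{a'} exp Q(s,a')`. -/
def softmax {S A : Type} [Fintype A] (Q : S → A → ℝ) (s : S) (a : A) : ℝ :=
  Real.exp (Q s a) / ∑ a', Real.exp (Q s a')

namespace Stmt4Aux

variable {S A : Type} [Fintype S] [Fintype A]


variable {S A : Type} [Fintype S] [Fintype A]

lemma stateDist_nonneg {P : S → A → S → ℝ} {pol : S → A → ℝ} {η : S → ℝ}
    (hP : IsKernel P) (hpol : IsPolicy pol) (hη : IsDist η) :
    ∀ t s, 0 ≤ stateDist P pol η t s := by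
  intro t
  induction t with
  | zero => exact hη.1
  | succ t ih =>
    intro s'
    apply Finset.sum_nonneg; intro s _
    apply Finset.sum_nonneg; intro a _
    exact mul_nonneg (mul_nonneg (ih s) (hpol.1 s a)) (hP.1 s a s')

lemma stateDist_sum {P : S → A → S → ℝ} {pol : S → A → ℝ} {η : S → ℝ}
    (hP : IsKernel P) (hpol : IsPolicy pol) (hη : IsDist η) :
    ∀ t, ∑ s, stateDist P pol η t s = 1 := by
  intro t
  induction t with
  | zero => exact hη.2
  | succ t ih =>
    show ∑ s', ∑ s, ∑ a, stateDist P pol η t s * pol s a * P s a s' = 1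
    rw [Finset.sum_comm]
    calc ∑ s, ∑ s', ∑ a, stateDist P pol η t s * pol s a * P s a s'
        = ∑ s, stateDist P pol η t s := by
          apply Finset.sum_congr rfl; intro s _
          rw [Finset.sum_comm]
          calc ∑ a, ∑ s', stateDist P pol η t s * pol s a * P s a s'
              = ∑ a, stateDist P pol η t s * pol s a := by
                apply Finset.sum_congr rfl; intro a _
                rw [← Finset.mul_sum, hP.2 s a, mul_one]
            _ = stateDist P pol η t s := by
                rw [← Finset.mul_sum, hpol.2 s, mul_one]
      _ = 1 := ih

lemma expec_abs_le {D : S → ℝ} {pol : S → A → ℝ}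
    (hD0 : ∀ s, 0 ≤ D s) (hpol : ∀ s a, 0 ≤ pol s a)
    {f g : S → A → ℝ} (hfg : ∀ s a, |f s a| ≤ g s a) :
    |∑ s, ∑ a, D s * pol s a * f s a| ≤ ∑ s, ∑ a, D s * pol s a * g s a := by
  calc |∑ s, ∑ a, D s * pol s a * f s a| ≤ ∑ s, |∑ a, D s * pol s a * f s a| :=
        Finset.abs_sum_le_sum_abs _ _
    _ ≤ ∑ s, ∑ a, |D s * pol s a * f s a| := by
        apply Finset.sum_le_sum; intro s _; exact Finset.abs_sum_le_sum_abs _ _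
    _ ≤ ∑ s, ∑ a, D s * pol s a * g s a := by
        apply Finset.sum_le_sum; intro s _
        apply Finset.sum_le_sum; intro a _
        rw [abs_mul, abs_of_nonneg (mul_nonneg (hD0 s) (hpol s a))]
        exact mul_le_mul_of_nonneg_left (hfg s a) (mul_nonneg (hD0 s) (hpol s a))

lemma expec_const {D : S → ℝ} {pol : S → A → ℝ}
    (hD1 : ∑ s, D s = 1) (hpol : ∀ s, ∑ a, pol s a = 1) (K : ℝ) :
    ∑ s, ∑ a, D s * pol s a * K = K := by
  calc ∑ s, ∑ a, D s * pol s a * K = ∑ s, D s * K := by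
        apply Finset.sum_congr rfl; intro s _
        calc ∑ a, D s * pol s a * K = ∑ a, (D s * K) * pol s a := by
              apply Finset.sum_congr rfl; intro a _; ring
          _ = D s * K := by rw [← Finset.mul_sum, hpol s, mul_one]
    _ = K := by rw [← Finset.sum_mul, hD1, one_mul]

lemma expec_abs_le_const {D : S → ℝ} {pol : S → A → ℝ}
    (hD0 : ∀ s, 0 ≤ D s) (hD1 : ∑ s, D s = 1) (hpol : IsPolicy pol)
    {f : S → A → ℝ} {K : ℝ} (hf : ∀ s a, |f s a| ≤ K) :
    |∑ s, ∑ a, D s * pol s a * f s a| ≤ K := by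
  have := expec_abs_le (g := fun _ _ => K) hD0 hpol.1 hf
  rwa [expec_const hD1 hpol.2] at this


lemma triple_reindex (c : S → A → S → ℝ) (V : S → ℝ) :
    ∑ s', (∑ s, ∑ a, c s a s') * V s' = ∑ s, ∑ a, ∑ s', c s a s' * V s' := by
  simp only [Finset.sum_mul]
  rw [Finset.sum_comm]
  exact Finset.sum_congr rfl fun s _ => Finset.sum_comm

set_option maxHeartbeats 1000000 in
lemma key (γ : ℝ) (hγ : γ ∈ Set.Ioo (0:ℝ) 1)
    (P Phat : S → A → S → ℝ) (hP : IsKernel P) (hPhat : IsKernel Phat)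
    (η : S → ℝ) (hη : IsDist η) (pol : S → A → ℝ) (hpol : IsPolicy pol)
    (f : S → A → ℝ) (Cf : ℝ) (hCf : 0 ≤ Cf) (hf : ∀ s a, |f s a| ≤ Cf)
    (V : S → ℝ) (Cv : ℝ) (hCv : 0 ≤ Cv) (hV : ∀ s, |V s| ≤ Cv) :
    |discSum γ P pol η (fun s a => f s a + γ * ∑ s', Phat s a s' * V s' - V s)
      - (discSum γ P pol η f - ∑ s, η s * V s)|
    ≤ γ * Cv / (1 - γ) * ∑ s, ∑ a, visit γ P pol η s a * ∑ s', |Phat s a s' - P s a s'| := by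
  obtain ⟨hγ0, hγ1⟩ := hγ
  have h1γ : (0:ℝ) < 1 - γ := by linarith
  have hgeo : Summable (fun t : ℕ => γ ^ t) := summable_geometric_of_lt_one hγ0.le hγ1
  set D := stateDist P pol η with hD
  have hD0 : ∀ t s, 0 ≤ D t s := stateDist_nonneg hP hpol hη
  have hD1 : ∀ t, ∑ s, D t s = 1 := stateDist_sum hP hpol hη
  set Δ : S → A → ℝ := fun s a => ∑ s', |Phat s a s' - P s a s'| with hΔdef
  have hΔ0 : ∀ s a, 0 ≤ Δ s a := fun s a =>
    Finset.sum_nonneg fun s' _ => abs_nonneg _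
  have hΔ2 : ∀ s a, Δ s a ≤ 2 := by
    intro s a
    calc Δ s a ≤ ∑ s', (Phat s a s' + P s a s') := by
          apply Finset.sum_le_sum; intro s' _
          calc |Phat s a s' - P s a s'| ≤ |Phat s a s'| + |P s a s'| := abs_sub _ _
            _ = Phat s a s' + P s a s' := by
                rw [abs_of_nonneg (hPhat.1 s a s'), abs_of_nonneg (hP.1 s a s')]
      _ = 2 := by rw [Finset.sum_add_distrib, hPhat.2 s a, hP.2 s a]; norm_num
  set h : S → A → ℝ := fun s a => γ * ∑ s', (Phat s a s' - P s a s') * V s' with hhdef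
  have hhb : ∀ s a, |h s a| ≤ γ * (Cv * Δ s a) := by
    intro s a
    simp only [hhdef, hΔdef]
    rw [abs_mul, abs_of_nonneg hγ0.le]
    apply mul_le_mul_of_nonneg_left _ hγ0.le
    calc |∑ s', (Phat s a s' - P s a s') * V s'| ≤ ∑ s', |(Phat s a s' - P s a s') * V s'| :=
          Finset.abs_sum_le_sum_abs _ _
      _ ≤ ∑ s', Cv * |Phat s a s' - P s a s'| := by
          apply Finset.sum_le_sum; intro s' _
          rw [abs_mul, mul_comm]
          exact mul_le_mul_of_nonneg_right (hV s') (abs_nonneg _)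
      _ = Cv * ∑ s', |Phat s a s' - P s a s'| := by rw [← Finset.mul_sum]
  set k : S → A → ℝ := fun s a => γ * ∑ s', P s a s' * V s' - V s with hkdef
  have hg : (fun s a => f s a + γ * ∑ s', Phat s a s' * V s' - V s)
      = fun s a => f s a + h s a + k s a := by
    funext s a
    have hsplit : ∑ s', (Phat s a s' - P s a s') * V s'
        = (∑ s', Phat s a s' * V s') - ∑ s', P s a s' * V s' := by
      rw [← Finset.sum_sub_distrib]
      apply Finset.sum_congr rfl; intro s' _; ring
    simp only [hhdef, hkdef, hsplit]
    ring
  set b : ℕ → ℝ := fun t => γ ^ t * ∑ s, D t s * V s with hbdef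
  have hEV : ∀ t, ∑ s, ∑ a, D t s * pol s a * V s = ∑ s, D t s * V s := by
    intro t
    apply Finset.sum_congr rfl; intro s _
    calc ∑ a, D t s * pol s a * V s = ∑ a, (D t s * V s) * pol s a := by
          apply Finset.sum_congr rfl; intro a _; ring
      _ = D t s * V s := by rw [← Finset.mul_sum, hpol.2 s, mul_one]
  have hbsucc : ∀ t, γ ^ t * ∑ s, ∑ a, D t s * pol s a * (γ * ∑ s', P s a s' * V s')
      = b (t + 1) := by
    intro t
    have hrhs : b (t + 1) = γ ^ (t+1) * ∑ s', (∑ s, ∑ a, D t s * pol s a * P s a s') * V s' := rfl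
    rw [hrhs, triple_reindex (fun s a s' => D t s * pol s a * P s a s') V]
    have hin : ∑ s, ∑ a, D t s * pol s a * (γ * ∑ s', P s a s' * V s')
        = γ * ∑ s, ∑ a, ∑ s', D t s * pol s a * P s a s' * V s' := by
      rw [Finset.mul_sum]
      apply Finset.sum_congr rfl; intro s _
      rw [Finset.mul_sum]
      apply Finset.sum_congr rfl; intro a _
      calc D t s * pol s a * (γ * ∑ s', P s a s' * V s')
          = γ * ((D t s * pol s a) * ∑ s', P s a s' * V s') := by ring
        _ = γ * ∑ s', (D t s * pol s a) * (P s a s' * V s') := by rw [Finset.mul_sum]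
        _ = γ * ∑ s', D t s * pol s a * P s a s' * V s' := by
            congr 1; apply Finset.sum_congr rfl; intro s' _; ring
    rw [hin]; ring
  set w : ℕ → ℝ := fun t => γ ^ t * ∑ s, ∑ a, D t s * pol s a * h s a with hwdef
  set vf : ℕ → ℝ := fun t => γ ^ t * ∑ s, ∑ a, D t s * pol s a * f s a with hvfdef
  set z : ℕ → ℝ := fun t => γ ^ t * ∑ s, ∑ a, D t s * pol s a * (γ * (Cv * Δ s a)) with hzdef
  have habs : ∀ (t : ℕ) (F : S → A → ℝ) (K : ℝ), (∀ s a, |F s a| ≤ K) →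
      |γ ^ t * ∑ s, ∑ a, D t s * pol s a * F s a| ≤ K * γ ^ t := by
    intro t F K hF
    rw [abs_mul, abs_of_nonneg (pow_nonneg hγ0.le t), mul_comm]
    exact mul_le_mul_of_nonneg_right
      (expec_abs_le_const (hD0 t) (hD1 t) hpol hF) (pow_nonneg hγ0.le t)
  have hsummable : ∀ (F : S → A → ℝ) (K : ℝ), (∀ s a, |F s a| ≤ K) →
      Summable (fun t => γ ^ t * ∑ s, ∑ a, D t s * pol s a * F s a) := by
    intro F K hF
    apply Summable.of_norm_bounded (hgeo.mul_left K)
    intro t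
    rw [Real.norm_eq_abs]
    exact habs t F K hF
  have hwS : Summable w := hsummable h (γ * (Cv * 2)) (fun s a =>
    le_trans (hhb s a) (mul_le_mul_of_nonneg_left
      (mul_le_mul_of_nonneg_left (hΔ2 s a) hCv) hγ0.le))
  have hvfS : Summable vf := hsummable f Cf hf
  have hzS : Summable z := hsummable _ (γ * (Cv * 2)) (fun s a => by
    rw [abs_of_nonneg (by positivity)]
    exact mul_le_mul_of_nonneg_left
      (mul_le_mul_of_nonneg_left (hΔ2 s a) hCv) hγ0.le)
  have hbS : Summable b := by
    apply Summable.of_norm_bounded (hgeo.mul_left Cv)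
    intro t
    rw [Real.norm_eq_abs, hbdef]
    rw [abs_mul, abs_of_nonneg (pow_nonneg hγ0.le t), mul_comm]
    apply mul_le_mul_of_nonneg_right _ (pow_nonneg hγ0.le t)
    calc |∑ s, D t s * V s| ≤ ∑ s, |D t s * V s| := Finset.abs_sum_le_sum_abs _ _
      _ ≤ ∑ s, D t s * Cv := by
          apply Finset.sum_le_sum; intro s _
          rw [abs_mul, abs_of_nonneg (hD0 t s)]
          exact mul_le_mul_of_nonneg_left (hV s) (hD0 t s)
      _ = Cv := by rw [← Finset.sum_mul, hD1 t, one_mul]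
  have hbS' : Summable (fun t => b (t + 1)) := (summable_nat_add_iff 1).2 hbS
  have hu : ∀ t, γ ^ t * ∑ s, ∑ a, D t s * pol s a * (f s a + h s a + k s a)
      = vf t + w t + (b (t + 1) - b t) := by
    intro t
    have hsplit : ∑ s, ∑ a, D t s * pol s a * (f s a + h s a + k s a)
        = (∑ s, ∑ a, D t s * pol s a * f s a) + (∑ s, ∑ a, D t s * pol s a * h s a)
          + ((∑ s, ∑ a, D t s * pol s a * (γ * ∑ s', P s a s' * V s'))
             - ∑ s, ∑ a, D t s * pol s a * V s) := by
      simp only [hkdef, mul_add, mul_sub, Finset.sum_add_distrib, Finset.sum_sub_distrib]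
    rw [hsplit, mul_add, mul_add, mul_sub, hbsucc t, hEV t]
  have hdecomp : discSum γ P pol η (fun s a => f s a + h s a + k s a)
      = (∑' t, vf t) + (∑' t, w t) + ((∑' t, b (t + 1)) - ∑' t, b t) := by
    simp only [discSum, ← hD]
    rw [tsum_congr hu]
    rw [Summable.tsum_add (hvfS.add hwS) (hbS'.sub hbS), Summable.tsum_add hvfS hwS, Summable.tsum_sub hbS' hbS]
  have htel : (∑' t, b (t + 1)) - (∑' t, b t) = - b 0 := by
    rw [Summable.tsum_eq_zero_add hbS]; ring
  have hb0 : b 0 = ∑ s, η s * V s := by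
    simp only [hbdef, hD, pow_zero, one_mul]
    rfl
  have hdSf : discSum γ P pol η f = ∑' t, vf t := by
    simp only [discSum, ← hD, hvfdef]
  have hgoal_eq : discSum γ P pol η (fun s a => f s a + γ * ∑ s', Phat s a s' * V s' - V s)
      - (discSum γ P pol η f - ∑ s, η s * V s) = ∑' t, w t := by
    rw [hg, hdecomp, htel, hb0, hdSf]
    ring
  rw [hgoal_eq]
  have hwz : ∀ t, |w t| ≤ z t := by
    intro t
    simp only [hwdef, hzdef]
    rw [abs_mul, abs_of_nonneg (pow_nonneg hγ0.le t)]
    apply mul_le_mul_of_nonneg_left _ (pow_nonneg hγ0.le t)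
    exact expec_abs_le (hD0 t) hpol.1 hhb
  have h1 : |∑' t, w t| ≤ ∑' t, z t := by
    calc |∑' t, w t| ≤ ∑' t, |w t| := by
          have := norm_tsum_le_tsum_norm (f := w) (by
            simpa only [Real.norm_eq_abs] using hwS.abs)
          simpa only [Real.norm_eq_abs] using this
      _ ≤ ∑' t, z t := Summable.tsum_le_tsum hwz hwS.abs hzS
  -- compute the visitation sum
  set T : ℝ := ∑' t, γ ^ t * ∑ s, ∑ a, D t s * pol s a * Δ s a with hTdef
  have hDle : ∀ t s, D t s ≤ 1 := by
    intro t s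
    calc D t s ≤ ∑ s', D t s' := Finset.single_le_sum (fun s' _ => hD0 t s') (Finset.mem_univ s)
      _ = 1 := hD1 t
  have hsm : ∀ (s : S) (a : A),
      Summable (fun t => (1 - γ) * ((γ ^ t * D t s) * (pol s a * Δ s a))) := by
    intro s a
    apply Summable.mul_left
    apply Summable.mul_right
    apply Summable.of_norm_bounded hgeo
    intro t
    rw [Real.norm_eq_abs, abs_of_nonneg (mul_nonneg (pow_nonneg hγ0.le t) (hD0 t s))]
    calc γ ^ t * D t s ≤ γ ^ t * 1 :=
          mul_le_mul_of_nonneg_left (hDle t s) (pow_nonneg hγ0.le t)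
      _ = γ ^ t := mul_one _
  have hvisit : ∑ s, ∑ a, visit γ P pol η s a * Δ s a = (1 - γ) * T := by
    have step1 : ∀ (s : S) (a : A), visit γ P pol η s a * Δ s a
        = ∑' t, (1 - γ) * ((γ ^ t * D t s) * (pol s a * Δ s a)) := by
      intro s a
      rw [tsum_mul_left, tsum_mul_right]
      simp only [visit, ← hD]
      ring
    calc ∑ s, ∑ a, visit γ P pol η s a * Δ s a
        = ∑ s, ∑ a, ∑' t, (1 - γ) * ((γ ^ t * D t s) * (pol s a * Δ s a)) := by
          apply Finset.sum_congr rfl; intro s _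
          apply Finset.sum_congr rfl; intro a _
          exact step1 s a
      _ = ∑' t, ∑ s, ∑ a, (1 - γ) * ((γ ^ t * D t s) * (pol s a * Δ s a)) := by
          rw [Summable.tsum_finsetSum (fun s _ => summable_sum (fun a _ => hsm s a))]
          apply Finset.sum_congr rfl; intro s _
          rw [Summable.tsum_finsetSum (fun a _ => hsm s a)]
      _ = ∑' t, (1 - γ) * (γ ^ t * ∑ s, ∑ a, D t s * pol s a * Δ s a) := by
          apply tsum_congr; intro t
          simp only [Finset.mul_sum]
          apply Finset.sum_congr rfl; intro s _
          apply Finset.sum_congr rfl; intro a _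
          ring
      _ = (1 - γ) * T := by
          rw [hTdef, ← tsum_mul_left]
  have hz : ∑' t, z t = γ * Cv * T := by
    have : ∀ t, z t = (γ * Cv) * (γ ^ t * ∑ s, ∑ a, D t s * pol s a * Δ s a) := by
      intro t
      simp only [hzdef, Finset.mul_sum]
      apply Finset.sum_congr rfl; intro s _
      apply Finset.sum_congr rfl; intro a _
      ring
    rw [tsum_congr this, tsum_mul_left, hTdef]
  calc |∑' t, w t| ≤ ∑' t, z t := h1
    _ = γ * Cv * T := hz
    _ = γ * Cv / (1 - γ) * ((1 - γ) * T) := by field_simp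
    _ = γ * Cv / (1 - γ) * ∑ s, ∑ a, visit γ P pol η s a * Δ s a := by rw [hvisit]


lemma log_softmax [Nonempty A] (Q : S → A → ℝ) (s : S) (a : A) :
    Real.log (softmax Q s a) = Q s a - lse Q s := by
  have hpos : 0 < ∑ a', Real.exp (Q s a') :=
    Finset.sum_pos (fun a' _ => Real.exp_pos _) Finset.univ_nonempty
  rw [softmax, Real.log_div (Real.exp_ne_zero _) (ne_of_gt hpos), Real.log_exp, lse]

lemma lse_bound [Nonempty S] [Nonempty A]
    (γ : ℝ) (hγ0 : 0 < γ) (hγ1 : γ < 1)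
    (Phat : S → A → S → ℝ) (hPhat : IsKernel Phat)
    (g : S → A → ℝ) (Cg : ℝ) (hg : ∀ s a, |g s a| ≤ Cg)
    (Q : S → A → ℝ)
    (hQ : ∀ s a, Q s a = g s a + γ * ∑ s', Phat s a s' * lse Q s') :
    ∀ s, |lse Q s| ≤ (Cg + Real.log (Fintype.card A)) / (1 - γ) := by
  have h1γ : (0:ℝ) < 1 - γ := by linarith
  have hcard : (1:ℝ) ≤ (Fintype.card A : ℝ) := by
    exact_mod_cast Fintype.card_pos
  have hlogA : 0 ≤ Real.log (Fintype.card A) := Real.log_nonneg hcard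
  set M : ℝ := Finset.univ.sup' Finset.univ_nonempty (fun s => |lse Q s|) with hM
  have hMle : ∀ s, |lse Q s| ≤ M := fun s =>
    Finset.le_sup' (fun s => |lse Q s|) (Finset.mem_univ s)
  have hM0 : 0 ≤ M := le_trans (abs_nonneg _) (hMle (Classical.arbitrary S))
  have hQb : ∀ s a, |Q s a| ≤ Cg + γ * M := by
    intro s a
    rw [hQ s a]
    calc |g s a + γ * ∑ s', Phat s a s' * lse Q s'|
        ≤ |g s a| + |γ * ∑ s', Phat s a s' * lse Q s'| := abs_add_le _ _
      _ ≤ Cg + γ * M := by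
          apply add_le_add (hg s a)
          rw [abs_mul, abs_of_nonneg hγ0.le]
          apply mul_le_mul_of_nonneg_left _ hγ0.le
          calc |∑ s', Phat s a s' * lse Q s'| ≤ ∑ s', |Phat s a s' * lse Q s'| :=
                Finset.abs_sum_le_sum_abs _ _
            _ ≤ ∑ s', Phat s a s' * M := by
                apply Finset.sum_le_sum; intro s' _
                rw [abs_mul, abs_of_nonneg (hPhat.1 s a s')]
                exact mul_le_mul_of_nonneg_left (hMle s') (hPhat.1 s a s')
            _ = M := by rw [← Finset.sum_mul, hPhat.2 s a, one_mul]
  have hlse : ∀ s, |lse Q s| ≤ Cg + γ * M + Real.log (Fintype.card A) := by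
    intro s
    have hpos : 0 < ∑ a, Real.exp (Q s a) :=
      Finset.sum_pos (fun a _ => Real.exp_pos _) Finset.univ_nonempty
    rw [abs_le]
    constructor
    · -- lower bound
      have ha := Classical.arbitrary A
      have h1 : Real.exp (-(Cg + γ * M)) ≤ ∑ a, Real.exp (Q s a) := by
        calc Real.exp (-(Cg + γ * M)) ≤ Real.exp (Q s ha) := by
              apply Real.exp_le_exp.2
              have := (abs_le.1 (hQb s ha)).1
              linarith
          _ ≤ ∑ a, Real.exp (Q s a) :=
            Finset.single_le_sum (fun a _ => (Real.exp_pos _).le) (Finset.mem_univ ha)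
      have := Real.log_le_log (Real.exp_pos _) h1
      rw [Real.log_exp] at this
      rw [lse]
      linarith
    · -- upper bound
      have h2 : ∑ a, Real.exp (Q s a) ≤ (Fintype.card A : ℝ) * Real.exp (Cg + γ * M) := by
        calc ∑ a, Real.exp (Q s a) ≤ ∑ _a : A, Real.exp (Cg + γ * M) := by
              apply Finset.sum_le_sum; intro a _
              exact Real.exp_le_exp.2 (abs_le.1 (hQb s a)).2
          _ = (Fintype.card A : ℝ) * Real.exp (Cg + γ * M) := by
              rw [Finset.sum_const, Finset.card_univ, nsmul_eq_mul]
      calc lse Q s ≤ Real.log ((Fintype.card A : ℝ) * Real.exp (Cg + γ * M)) :=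
            Real.log_le_log hpos h2
        _ = Real.log (Fintype.card A) + (Cg + γ * M) := by
            rw [Real.log_mul (by positivity) (Real.exp_ne_zero _), Real.log_exp]
        _ = Cg + γ * M + Real.log (Fintype.card A) := by ring
  have hMb : M ≤ Cg + γ * M + Real.log (Fintype.card A) :=
    Finset.sup'_le _ _ fun s _ => hlse s
  have hMfin : M ≤ (Cg + Real.log (Fintype.card A)) / (1 - γ) := by
    rw [le_div_iff₀ h1γ]
    nlinarith
  intro s
  exact le_trans (hMle s) hMfin


end Stmt4Aux


open Stmt4Aux in
/-- **suboptimality of the surrogate maximizer.**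
Let `θ*` be any maximizer of the likelihood objective `L` and `θ̂` any maximizer of
the surrogate objective `L̂`.  Assuming `|r(s,a;θ)| ≤ C_r` and `|U(s,a)| ≤ C_u`
for all `s, a, θ`,
`L(θ*) - L(θ̂) ≤ (2γ C_v/(1-γ)) · E_{(s,a) ∼ dᴱ}[ ‖P̂(·|s,a) - P(·|s,a)‖₁ ]`,
where `C_v = (C_r + C_u + log |A|)/(1-γ)`. -/

theorem stmt4 {S A : Type} [Fintype S] [Fintype A] [Nonempty S] [Nonempty A] (d : ℕ)
    (γ : ℝ) (hγ : γ ∈ Set.Ioo (0 : ℝ) 1)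
    (P : S → A → S → ℝ) (hP : IsKernel P)
    (Phat : S → A → S → ℝ) (hPhat : IsKernel Phat)
    (η : S → ℝ) (hη : IsDist η)
    (piE : S → A → ℝ) (hpiE : IsPolicy piE)
    (r : S → A → EuclideanSpace ℝ (Fin d) → ℝ) (U : S → A → ℝ)
    (Cr Cu : ℝ) (hCr : 0 < Cr) (hCu : 0 < Cu)
    (hr : ∀ s a θ, |r s a θ| ≤ Cr) (hU : ∀ s a, |U s a| ≤ Cu)
    (Q : EuclideanSpace ℝ (Fin d) → S → A → ℝ)
    (hQ : ∀ θ s a, Q θ s a = r s a θ + U s a + γ * ∑ s', Phat s a s' * lse (Q θ) s')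
    (θstar θhat : EuclideanSpace ℝ (Fin d))
    (hstar : ∀ θ, discSum γ P piE η (fun s a => Real.log (softmax (Q θ) s a)) ≤
        discSum γ P piE η (fun s a => Real.log (softmax (Q θstar) s a)))
    (hhat : ∀ θ, (discSum γ P piE η (fun s a => r s a θ + U s a) - ∑ s, η s * lse (Q θ) s) ≤
        (discSum γ P piE η (fun s a => r s a θhat + U s a) - ∑ s, η s * lse (Q θhat) s)) :
    discSum γ P piE η (fun s a => Real.log (softmax (Q θstar) s a)) -
        discSum γ P piE η (fun s a => Real.log (softmax (Q θhat) s a)) ≤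
      2 * γ * ((Cr + Cu + Real.log (Fintype.card A)) / (1 - γ)) / (1 - γ) *
        ∑ s, ∑ a, visit γ P piE η s a * ∑ s', |Phat s a s' - P s a s'| := by
  obtain ⟨hγ0, hγ1⟩ := hγ
  have h1γ : (0:ℝ) < 1 - γ := by linarith
  set Cv := (Cr + Cu + Real.log (Fintype.card A)) / (1 - γ) with hCvdef
  have hCv0 : 0 ≤ Cv := by
    apply div_nonneg _ h1γ.le
    have : 0 ≤ Real.log (Fintype.card A) :=
      Real.log_nonneg (by exact_mod_cast Fintype.card_pos)
    linarith
  have hru : ∀ θ s a, |r s a θ + U s a| ≤ Cr + Cu := fun θ s a =>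
    (abs_add_le _ _).trans (add_le_add (hr s a θ) (hU s a))
  have hVb : ∀ θ s, |lse (Q θ) s| ≤ Cv := by
    intro θ
    exact lse_bound γ hγ0 hγ1 Phat hPhat (fun s a => r s a θ + U s a) (Cr + Cu)
      (hru θ) (Q θ) (fun s a => hQ θ s a)
  have hLrw : ∀ θ, discSum γ P piE η (fun s a => Real.log (softmax (Q θ) s a))
      = discSum γ P piE η (fun s a =>
          r s a θ + U s a + γ * ∑ s', Phat s a s' * lse (Q θ) s' - lse (Q θ) s) := by
    intro θ
    congr 1
    funext s a
    rw [log_softmax, hQ θ s a]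
  set B := γ * Cv / (1 - γ) *
      ∑ s, ∑ a, visit γ P piE η s a * ∑ s', |Phat s a s' - P s a s'| with hBdef
  have hkey : ∀ θ, |discSum γ P piE η (fun s a => Real.log (softmax (Q θ) s a))
      - (discSum γ P piE η (fun s a => r s a θ + U s a) - ∑ s, η s * lse (Q θ) s)| ≤ B := by
    intro θ
    rw [hLrw θ]
    exact key γ ⟨hγ0, hγ1⟩ P Phat hP hPhat η hη piE hpiE
      (fun s a => r s a θ + U s a) (Cr + Cu) (by positivity) (hru θ)
      (lse (Q θ)) Cv hCv0 (hVb θ)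
  have h1 := abs_le.1 (hkey θstar)
  have h2 := abs_le.1 (hkey θhat)
  have h3 := hhat θstar
  have h2B : 2 * γ * Cv / (1 - γ) *
      ∑ s, ∑ a, visit γ P piE η s a * ∑ s', |Phat s a s' - P s a s'| = 2 * B := by
    rw [hBdef]; ring
  linarith [h1.1, h1.2, h2.1, h2.2]
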